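/- arXiv:2010.03622 — 3 statements merged into one kernel-verified Lean document; each statement's English description precedes it below -/
import Mathlib

section
/- In the simplified setting where the classifier G is fully input-consistent (G(x) = G(x') for all x and all x' ∈ B(x)): if x' ∈ M(G) and B(x) ∩ B(x') ≠ ∅, then G(x) = G(x'). Consequently, {x : G(x) ≠ G_pl(x) and x ∉ M(G_pl)} ⊇ N*(V) \ M(G_pl), where V = M(G) ∩ M(G_pl). -/
open MeasureTheory Set ProbabilityTheory

noncomputable def pr {X : Type*} [MeasurableSpace X] (P : Measure X) (S : Set X) : ℝ :=
  (P S).toReal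

def nbhd {X : Type*} (B : X → Set X) (S : Set X) : Set X :=
  {x' | ∃ x ∈ S, (B x ∩ B x').Nonempty}

def cls {X : Type*} {K : ℕ} (Gstar : X → Fin K) (i : Fin K) : Set X := {x | Gstar x = i}

def nstar {X : Type*} {K : ℕ} (B : X → Set X) (Gstar : X → Fin K) (S : Set X) : Set X :=
  ⋃ i, nbhd B (S ∩ cls Gstar i) ∩ cls Gstar i

def robustSet {X : Type*} {K : ℕ} (B : X → Set X) (G : X → Fin K) : Set X :=
  {x | ∀ x' ∈ B x, G x' = G x}

def mset {X : Type*} {K : ℕ} (Gstar G : X → Fin K) : Set X := {x | G x ≠ Gstar x}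

theorem stmt4 {X : Type*} {K : ℕ}
    (B : X → Set X) (hB : ∀ x, x ∈ B x)
    (Gstar Gpl G : X → Fin K)
    (hcons : ∀ x, ∀ x' ∈ B x, G x' = G x) :
    (∀ x x', x' ∈ mset Gstar G → (B x ∩ B x').Nonempty → G x = G x') ∧
    nstar B Gstar (mset Gstar G ∩ mset Gstar Gpl) \ mset Gstar Gpl ⊆
      {x | G x ≠ Gpl x ∧ x ∉ mset Gstar Gpl} := by
  have key : ∀ x x', (B x ∩ B x').Nonempty → G x = G x' := by
    rintro x x' ⟨y, hy1, hy2⟩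
    rw [← hcons x y hy1, hcons x' y hy2]
  refine ⟨fun x x' _ h => key x x' h, ?_⟩
  rintro x ⟨hx, hnp⟩
  simp only [nstar, mem_iUnion] at hx
  obtain ⟨i, ⟨z, ⟨⟨hzG, hzP⟩, hzi⟩, hov⟩, hxi⟩ := hx
  have hGx : G x = G z := (key z x hov).symm
  have hx' : Gpl x = Gstar x := not_not.mp hnp
  refine ⟨?_, hnp⟩
  rw [hGx, hx', hxi]
  rw [cls, mem_setOf_eq] at hzi
  rw [← hzi]
  exact hzG
end

section
/- Under (q, ξ)-constant-expansion, if a classifier G satisfies R_B(G) < ξ and min_i P({x : G(x) = i}) > 2·max{q, R_B(G)}, then for every predicted class j there exists a ground-truth class i such that P(S_B(G) ∩ C_i ∩ Ĉ_j) > P(S_B(G) ∩ C_i)/2, where Ĉ_j = {x : G(x) = j}. -/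
/-!
Fix a predicted class `j` and suppose every ground-truth class `C_i` has at most half of its
robust mass inside `Ĉ_j`. Then `S = S_B(G) ∩ Ĉ_j` satisfies the hypotheses of constant
expansion: it has mass at least `P(Ĉ_j) - R_B(G) > max q R_B(G)`, and its trace on each `C_i`
is at most `P(C_i)/2`. So `P(N*(S) \ S) ≥ min ξ P(S) > R_B(G)`. But a robust point that is
`B`-adjacent to a robust point of `Ĉ_j` is itself in `Ĉ_j`, hence `N*(S) \ S` consists of
non-robust points only and has mass at most `R_B(G)`: a contradiction.
-/

open MeasureTheory Set

section Probability

variable {X : Type*} [MeasurableSpace X] (P : Measure X) [IsFiniteMeasure P]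

lemma pr_mono {A C : Set X} (h : A ⊆ C) : pr P A ≤ pr P C :=
  measureReal_mono h

lemma pr_le_pr_inter_add_pr_compl (A S : Set X) : pr P A ≤ pr P (S ∩ A) + pr P Sᶜ :=
  calc pr P A ≤ pr P (S ∩ A ∪ Sᶜ) := pr_mono P fun x hx => by
          by_cases hS : x ∈ S
          · exact Or.inl ⟨hS, hx⟩
          · exact Or.inr hS
    _ ≤ pr P (S ∩ A) + pr P Sᶜ := measureReal_union_le _ _

end Probability

section Neighbourhoods

variable {X : Type*} {K : ℕ} (B : X → Set X)

lemma nstar_subset_nbhd (Gstar : X → Fin K) (S : Set X) : nstar B Gstar S ⊆ nbhd B S := by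
  simp only [nstar, iUnion_subset_iff]
  rintro i x ⟨⟨z, ⟨hzS, -⟩, hzx⟩, -⟩
  exact ⟨z, hzS, hzx⟩

lemma compl_robustSet (G : X → Fin K) :
    (robustSet B G)ᶜ = {x | ∃ x' ∈ B x, G x' ≠ G x} := by
  ext x
  simp [robustSet]

lemma nbhd_robust_inter_robust_subset (G : X → Fin K) (j : Fin K) :
    nbhd B (robustSet B G ∩ {x | G x = j}) ∩ robustSet B G ⊆ {x | G x = j} := by
  rintro x ⟨⟨z, ⟨hz, hzj⟩, y, hyz, hyx⟩, hx⟩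
  calc G x = G y := (hx y hyx).symm
    _ = G z := hz y hyz
    _ = j := hzj

lemma nstar_robust_diff_subset (Gstar G : X → Fin K) (j : Fin K) :
    nstar B Gstar (robustSet B G ∩ {x | G x = j}) \ (robustSet B G ∩ {x | G x = j}) ⊆
      (robustSet B G)ᶜ := by
  rintro x ⟨hxN, hxS⟩ hx
  exact hxS ⟨hx,
    nbhd_robust_inter_robust_subset B G j ⟨nstar_subset_nbhd B Gstar _ hxN, hx⟩⟩

end Neighbourhoods

theorem stmt7_general {X : Type*} [MeasurableSpace X] {K : ℕ}
    (P : Measure X) [IsProbabilityMeasure P]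
    (B : X → Set X)
    (Gstar G : X → Fin K) (q ξ : ℝ)
    (hexp : ∀ S : Set X, pr P S ≥ q →
      (∀ i, pr P (S ∩ cls Gstar i) ≤ pr P (cls Gstar i) / 2) →
      pr P (nstar B Gstar S \ S) ≥ min ξ (pr P S))
    (hRB : pr P {x | ∃ x' ∈ B x, G x' ≠ G x} < ξ)
    (hmin : ∀ j : Fin K,
      pr P {x | G x = j} > 2 * max q (pr P {x | ∃ x' ∈ B x, G x' ≠ G x})) :
    ∀ j : Fin K, ∃ i : Fin K,
      pr P (robustSet B G ∩ cls Gstar i ∩ {x | G x = j}) >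
        pr P (robustSet B G ∩ cls Gstar i) / 2 := by
  intro j
  by_contra! hsmall
  rw [← compl_robustSet] at hRB hmin
  set R := pr P (robustSet B G)ᶜ
  set S := robustSet B G ∩ {x | G x = j}
  have hSmass : max q R < pr P S := by
    have := pr_le_pr_inter_add_pr_compl P {x | G x = j} (robustSet B G)
    linarith [hmin j, le_max_right q R]
  have hShalf : ∀ i, pr P (S ∩ cls Gstar i) ≤ pr P (cls Gstar i) / 2 := fun i => by
    have hS_eq : S ∩ cls Gstar i = robustSet B G ∩ cls Gstar i ∩ {x | G x = j} := by
      simp only [S, inter_right_comm]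
    rw [hS_eq]
    linarith [hsmall i, pr_mono P (inter_subset_right : robustSet B G ∩ cls Gstar i ⊆ _)]
  have hgrow := hexp S ((le_max_left q R).trans hSmass.le) hShalf
  have hbound : pr P (nstar B Gstar S \ S) ≤ R := pr_mono P (nstar_robust_diff_subset B Gstar G j)
  have : R < min ξ (pr P S) := lt_min hRB ((le_max_right q R).trans_lt hSmass)
  linarith

theorem stmt7 {X : Type*} [MeasurableSpace X] {K : ℕ}
    (P : Measure X) [IsProbabilityMeasure P]
    (B : X → Set X) (hB : ∀ x, x ∈ B x)
    (Gstar G : X → Fin K) (q ξ : ℝ)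
    (hexp : ∀ S : Set X, pr P S ≥ q →
      (∀ i, pr P (S ∩ cls Gstar i) ≤ pr P (cls Gstar i) / 2) →
      pr P (nstar B Gstar S \ S) ≥ min ξ (pr P S))
    (hRB : pr P {x | ∃ x' ∈ B x, G x' ≠ G x} < ξ)
    (hmin : ∀ j : Fin K,
      pr P {x | G x = j} > 2 * max q (pr P {x | ∃ x' ∈ B x, G x' ≠ G x})) :
    ∀ j : Fin K, ∃ i : Fin K,
      pr P (robustSet B G ∩ cls Gstar i ∩ {x | G x = j}) >
        pr P (robustSet B G ∩ cls Gstar i) / 2 :=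
  stmt7_general P B Gstar G q ξ hexp hRB hmin
end

section
/- Let U be any set of the form S_B(G) ∩ (⋃_{i∈I} C_i) ∩ (⋃_{j∈J} Ĉ_j) for arbitrary subsets I, J ⊆ [K], where Ĉ_j = {x : G(x) = j}. Then N*(U) \ U is contained in the complement of S_B(G): every within-class neighbor of U that lies outside U fails to be robustly labeled by G. -/
open MeasureTheory Set ProbabilityTheory

section

variable {X : Type*} {K : ℕ} {B : X → Set X}

theorem label_eq_of_mem_robustSet {G : X → Fin K} {x x' : X} (hx : x ∈ robustSet B G)
    (hx' : x' ∈ robustSet B G) (h : (B x ∩ B x').Nonempty) : G x = G x' := by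
  obtain ⟨y, hyx, hyx'⟩ := h
  rw [← hx y hyx, hx' y hyx']

theorem exists_of_mem_nstar {Gstar : X → Fin K} {S : Set X} {x' : X}
    (h : x' ∈ nstar B Gstar S) : ∃ x ∈ S, Gstar x = Gstar x' ∧ (B x ∩ B x').Nonempty := by
  simp only [nstar, mem_iUnion, mem_inter_iff] at h
  obtain ⟨i, ⟨x, ⟨hxS, hxi⟩, hxx'⟩, hx'i⟩ := h
  exact ⟨x, hxS, hxi.trans hx'i.symm, hxx'⟩

end

theorem stmt11_general {X : Type*} {K : ℕ}
    (B : X → Set X)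
    (Gstar G : X → Fin K) (I J : Set (Fin K)) :
    nstar B Gstar (robustSet B G ∩ (⋃ i ∈ I, cls Gstar i) ∩ (⋃ j ∈ J, {x | G x = j}))
        \ (robustSet B G ∩ (⋃ i ∈ I, cls Gstar i) ∩ (⋃ j ∈ J, {x | G x = j}))
      ⊆ (robustSet B G)ᶜ := by
  rintro x' ⟨hx'U, hx'notU⟩ hx'rob
  obtain ⟨x, ⟨⟨hxrob, hxI⟩, hxJ⟩, hcls, hBx⟩ := exists_of_mem_nstar hx'U
  have hG : G x = G x' := label_eq_of_mem_robustSet hxrob hx'rob hBx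
  refine hx'notU ⟨⟨hx'rob, ?_⟩, ?_⟩
  · simpa [cls, hcls] using hxI
  · simpa [hG] using hxJ

theorem stmt11 {X : Type*} {K : ℕ}
    (B : X → Set X) (hB : ∀ x, x ∈ B x)
    (Gstar G : X → Fin K) (I J : Set (Fin K)) :
    nstar B Gstar (robustSet B G ∩ (⋃ i ∈ I, cls Gstar i) ∩ (⋃ j ∈ J, {x | G x = j}))
        \ (robustSet B G ∩ (⋃ i ∈ I, cls Gstar i) ∩ (⋃ j ∈ J, {x | G x = j}))
      ⊆ (robustSet B G)ᶜ :=
  stmt11_general B Gstar G I J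
end
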